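/- arXiv:1709.04435 — 3 statements merged into one kernel-verified Lean document; each statement's English description precedes it below -/
import Mathlib

section
/- Let K be a commutative Noetherian ring with identity, let A be an associative K-algebra (not necessarily commutative or unital), and let B be a K-subalgebra of A such that the quotient K-module A/B is finitely generated. Then B contains a two-sided ideal I of A such that the quotient K-module B/I is finitely generated (hence A/I is also a finitely generated K-module). -/
/-!
Let `I` be the set of `b ∈ B` with `A b, b A, A b A ⊆ B`; it is the largest two-sided ideal of
`A` inside `B`. Choose a finite `t ⊆ A` spanning `A` modulo `B`. A linear map on `A` that kills
both `B` and `t` is zero, and since `B` is a subalgebra this lets the conditions defining `I` be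
tested on `t` alone: `I` is the kernel of `a ↦ (a, x a, a x, x a y)_{x, y ∈ t}` modulo `B`, a map
into finitely many copies of the Noetherian module `A / B`. Hence `A / I`, and with it its
submodule `B / I`, is finitely generated.
-/

/-- The free non-unital associative `K`-algebra on `X`: the semigroup algebra of the free
semigroup `X⁺` over `K`. -/
abbrev FreeNUAlg (K X : Type*) [CommRing K] : Type _ := MonoidAlgebra K (FreeSemigroup X)

/-- The two-sided ideal (as a `K`-submodule closed under left and right multiplication)
generated by a set in a non-unital `K`-algebra. -/
def idealSpan (K : Type*) {A : Type*} [CommRing K] [NonUnitalRing A] [Module K A]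
    (s : Set A) : Submodule K A :=
  sInf {J : Submodule K A | s ⊆ J ∧ ∀ a b : A, b ∈ J → a * b ∈ J ∧ b * a ∈ J}

/-- A non-unital `K`-algebra is finitely generated if some finite subset generates it as a
`K`-algebra. -/
def NUAlgFG (K A : Type*) [CommRing K] [NonUnitalRing A] [Module K A]
    [IsScalarTower K A A] [SMulCommClass K A A] : Prop :=
  ∃ s : Finset A, NonUnitalAlgebra.adjoin K (s : Set A) = ⊤

/-- A non-unital `K`-algebra is finitely presented if it is isomorphic to the quotient of a
free algebra `K⟨X⟩` on a finite set `X` by a finitely generated two-sided ideal, i.e. there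
is a surjection from some `K⟨X⟩`, `X` finite, whose kernel is a finitely generated
two-sided ideal. -/
def NUAlgFP (K A : Type*) [CommRing K] [NonUnitalRing A] [Module K A]
    [IsScalarTower K A A] [SMulCommClass K A A] : Prop :=
  ∃ (n : ℕ) (f : FreeNUAlg K (Fin n) →ₙₐ[K] A),
    Function.Surjective f ∧
      ∃ s : Finset (FreeNUAlg K (Fin n)),
        ∀ x, f x = 0 ↔ x ∈ idealSpan K (s : Set (FreeNUAlg K (Fin n)))

namespace Submodule
variable {R M : Type*} [Ring R] [AddCommGroup M] [Module R M]

theorem exists_finset_span_sup_eq_top (p : Submodule R M) [Module.Finite R (M ⧸ p)] :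
    ∃ t : Finset M, span R t ⊔ p = ⊤ := by
  classical
  obtain ⟨s, hs⟩ := Module.Finite.fg_top (R := R) (M := M ⧸ p)
  refine ⟨s.image Quotient.out, ?_⟩
  rw [sup_comm, ← map_mkQ_eq_top, map_span, Finset.coe_image, ← Set.image_comp]
  convert hs
  ext v
  simp

theorem eq_top_of_span_sup_eq_top {s : Set M} {p q : Submodule R M} (h : span R s ⊔ p = ⊤)
    (hs : s ⊆ q) (hp : p ≤ q) : q = ⊤ :=
  top_le_iff.mp (h ▸ sup_le (span_le.mpr hs) hp)

end Submodule

theorem Module.Finite.quotient_ker_of_isNoetherian {R M N : Type*} [Ring R] [AddCommGroup M]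
    [Module R M] [AddCommGroup N] [Module R N] [IsNoetherian R N] (f : M →ₗ[R] N) :
    Module.Finite R (M ⧸ LinearMap.ker f) :=
  Module.Finite.equiv f.quotKerEquivRange.symm

theorem Submodule.finite_quotient_comap_subtype {R M : Type*} [Ring R] [AddCommGroup M]
    [Module R M] (p q : Submodule R M) [IsNoetherian R (M ⧸ q)] :
    Module.Finite R (p ⧸ q.comap p.subtype) := by
  have h := Module.Finite.quotient_ker_of_isNoetherian (q.mkQ ∘ₗ p.subtype)
  rwa [LinearMap.ker_comp, Submodule.ker_mkQ] at h

namespace NonUnitalSubalgebra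
variable {K A : Type*} [CommRing K] [NonUnitalRing A] [Module K A] [IsScalarTower K A A]
  [SMulCommClass K A A] (B : NonUnitalSubalgebra K A)

open LinearMap in
def idealCore : Submodule K A :=
  B.toSubmodule ⊓ (⨅ a, B.toSubmodule.comap (mulLeft K a)) ⊓
    (⨅ a, B.toSubmodule.comap (mulRight K a)) ⊓
    ⨅ (a) (a'), B.toSubmodule.comap (mulLeft K a ∘ₗ mulRight K a')

variable {B}

theorem mem_idealCore {b : A} :
    b ∈ B.idealCore ↔ b ∈ B ∧ (∀ a, a * b ∈ B) ∧ (∀ a, b * a ∈ B) ∧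
      ∀ a a', a * (b * a') ∈ B := by
  simp [idealCore, and_assoc]

theorem idealCore_le : B.idealCore ≤ B.toSubmodule := fun _ hb => (mem_idealCore.mp hb).1

theorem mul_mem_idealCore {b : A} (hb : b ∈ B.idealCore) (a : A) :
    a * b ∈ B.idealCore ∧ b * a ∈ B.idealCore := by
  obtain ⟨hb, hl, hr, hm⟩ := mem_idealCore.mp hb
  refine ⟨mem_idealCore.mpr ⟨hl a, fun c => ?_, fun c => ?_, fun c c' => ?_⟩,
    mem_idealCore.mpr ⟨hr a, fun c => ?_, fun c => ?_, fun c c' => ?_⟩⟩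
  · simpa [mul_assoc] using hl (c * a)
  · simpa [mul_assoc] using hm a c
  · simpa [mul_assoc] using hm (c * a) c'
  · simpa [mul_assoc] using hm c a
  · simpa [mul_assoc] using hr (a * c)
  · simpa [mul_assoc] using hm c (a * c')

variable (B) in
open LinearMap in
def idealCoreTest (t : Finset A) :
    A →ₗ[K] (A ⧸ B.toSubmodule) × (t → A ⧸ B.toSubmodule) × (t → A ⧸ B.toSubmodule) ×
      (t → t → A ⧸ B.toSubmodule) :=
  let π := B.toSubmodule.mkQ
  π.prod <| (pi fun x : t => π ∘ₗ mulLeft K (x : A)).prod <|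
    (pi fun x : t => π ∘ₗ mulRight K (x : A)).prod <|
      pi fun x : t => pi fun y : t => π ∘ₗ mulLeft K (x : A) ∘ₗ mulRight K (y : A)

theorem mem_ker_idealCoreTest {t : Finset A} {b : A} :
    b ∈ LinearMap.ker (B.idealCoreTest t) ↔ b ∈ B ∧ (∀ x ∈ t, x * b ∈ B) ∧
      (∀ x ∈ t, b * x ∈ B) ∧ ∀ x ∈ t, ∀ y ∈ t, x * (b * y) ∈ B := by
  simp [idealCoreTest, funext_iff]

theorem ker_idealCoreTest {t : Finset A} (ht : Submodule.span K t ⊔ B.toSubmodule = ⊤) :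
    LinearMap.ker (B.idealCoreTest t) = B.idealCore := by
  have saturate : ∀ q : Submodule K A, (t : Set A) ⊆ q → B.toSubmodule ≤ q → ∀ a, a ∈ q :=
    fun q hs hp => Submodule.eq_top_iff'.mp (Submodule.eq_top_of_span_sup_eq_top ht hs hp)
  ext b
  rw [mem_ker_idealCoreTest, mem_idealCore]
  refine ⟨fun ⟨hb, hl, hr, hm⟩ => ?_, fun ⟨hb, hl, hr, hm⟩ =>
    ⟨hb, fun x _ => hl x, fun x _ => hr x, fun x _ y _ => hm x y⟩⟩
  have hr' : ∀ a, b * a ∈ B := saturate (B.toSubmodule.comap (.mulLeft K b)) hr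
    fun a ha => B.mul_mem hb ha
  have hl' : ∀ a, a * b ∈ B := saturate (B.toSubmodule.comap (.mulRight K b)) hl
    fun a ha => B.mul_mem ha hb
  have hm₁ : ∀ x ∈ t, ∀ a, x * (b * a) ∈ B := fun x hx =>
    saturate (B.toSubmodule.comap (.mulLeft K x ∘ₗ .mulLeft K b)) (hm x hx)
      fun a ha => by simpa [← mul_assoc] using B.mul_mem (hl x hx) ha
  exact ⟨hb, hl', hr', fun a a' =>
    saturate (B.toSubmodule.comap (.mulRight K (b * a'))) (fun x hx => hm₁ x hx a')
      (fun c hc => B.mul_mem hc (hr' a')) a⟩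

theorem finite_quotient_idealCore [IsNoetherianRing K] [Module.Finite K (A ⧸ B.toSubmodule)] :
    Module.Finite K (A ⧸ B.idealCore) := by
  obtain ⟨t, ht⟩ := B.toSubmodule.exists_finset_span_sup_eq_top
  have : IsNoetherian K (A ⧸ B.toSubmodule) := isNoetherian_of_isNoetherianRing_of_finite _ _
  exact ker_idealCoreTest ht ▸ Module.Finite.quotient_ker_of_isNoetherian (B.idealCoreTest t)

end NonUnitalSubalgebra

open NonUnitalSubalgebra in
/-- Let `K` be a commutative Noetherian ring with identity, `A` an
associative `K`-algebra (not necessarily commutative or unital) and `B` a `K`-subalgebra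
such that `A/B` is a finitely generated `K`-module. Then `B` contains a two-sided ideal
`I` of `A` (a `K`-submodule closed under left and right multiplication by elements of `A`)
such that `B/I` is a finitely generated `K`-module, and hence `A/I` is also a finitely
generated `K`-module. -/
theorem exists_ideal_of_finite_corank
    (K A : Type*) [CommRing K] [IsNoetherianRing K]
    [NonUnitalRing A] [Module K A] [IsScalarTower K A A] [SMulCommClass K A A]
    (B : NonUnitalSubalgebra K A)
    (hB : Module.Finite K (A ⧸ B.toSubmodule)) :
    ∃ I : Submodule K A,
      (∀ a b : A, b ∈ I → a * b ∈ I ∧ b * a ∈ I) ∧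
      I ≤ B.toSubmodule ∧
      Module.Finite K (B.toSubmodule ⧸ I.comap B.toSubmodule.subtype) ∧
      Module.Finite K (A ⧸ I) := by
  have hAI := finite_quotient_idealCore (B := B)
  have : IsNoetherian K (A ⧸ B.idealCore) := isNoetherian_of_isNoetherianRing_of_finite _ _
  exact ⟨B.idealCore, fun a _ hb => mul_mem_idealCore hb a, idealCore_le,
    B.toSubmodule.finite_quotient_comap_subtype _, hAI⟩
end

section
/- Let K be a commutative ring with identity, let A be an associative K-algebra (not necessarily commutative or unital), and let B be a two-sided ideal of A. If both B and the quotient algebra A/B are finitely presented as K-algebras, then A is finitely presented as a K-algebra. -/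
/-! Present `B` by `g : K⟨X⟩ → B` with relations `T` and `C` by `h : K⟨Y⟩ → C` with relations
`S`, and send each `y ∈ Y` to a preimage in `A` of `h y`; this gives a surjection
`π : K⟨X ⊔ Y⟩ → A` (with `X ⊔ Y` realised as `Fin (m + n)`). The images of the relations `S` and
the mixed products `y x`, `x y` are finitely many elements that `π` maps into `B`; relate each of
them to a preimage in `K⟨X⟩` of its image, and add `T`. For the ideal `I` so generated,
`M = K⟨X⟩ + I` is an ideal, because the mixed products fall into it, and `K⟨Y⟩ + M` is everything.
If `π x = 0`, write `x = c + m` with `c ∈ K⟨Y⟩`, `m ∈ M`: then `h c = 0`, so `c` lies in the ideal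
generated by `S` and hence in `M`; now `x = b + i` with `b ∈ K⟨X⟩`, `i ∈ I`, and `g b = 0` puts
`b` in the ideal generated by `T`, so `x ∈ I`. -/

section

open NonUnitalAlgebra Function

variable {K : Type*} [CommRing K]

theorem le_of_le_sup_of_inf_le {α : Type*} [Lattice α] [IsModularLattice α] {N R I : α}
    (hIN : I ≤ N) (hN : N ≤ R ⊔ I) (hNR : N ⊓ R ≤ I) : N ≤ I :=
  calc N = N ⊓ (R ⊔ I) := (inf_eq_left.2 hN).symm
    _ ≤ N ⊓ R ⊔ I := inf_sup_le_assoc_of_le R hIN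
    _ ≤ I := sup_le hNR le_rfl

section IdealSpan

variable {A A' : Type*} [NonUnitalRing A] [Module K A] [NonUnitalRing A'] [Module K A']

def Submodule.IsIdeal (J : Submodule K A) : Prop :=
  ∀ a b : A, b ∈ J → a * b ∈ J ∧ b * a ∈ J

theorem subset_idealSpan (s : Set A) : s ⊆ idealSpan K s :=
  fun _ hx => Submodule.mem_sInf.2 fun _ hJ => hJ.1 hx

theorem idealSpan_le {s : Set A} {J : Submodule K A} (hs : s ⊆ J) (hJ : J.IsIdeal) :
    idealSpan K s ≤ J :=
  sInf_le ⟨hs, hJ⟩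

theorem isIdeal_idealSpan (s : Set A) : (idealSpan K s).IsIdeal := by
  intro a b hb
  simp only [idealSpan, Submodule.mem_sInf] at hb ⊢
  exact ⟨fun J hJ => (hJ.2 a b (hb J hJ)).1, fun J hJ => (hJ.2 a b (hb J hJ)).2⟩

theorem Submodule.IsIdeal.comap {J : Submodule K A'} (hJ : J.IsIdeal) (φ : A →ₙₐ[K] A') :
    (J.comap (φ : A →ₗ[K] A')).IsIdeal := by
  intro a b hb
  simp only [Submodule.mem_comap, LinearMap.coe_coe, map_mul] at hb ⊢
  exact hJ (φ a) (φ b) hb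

theorem isIdeal_ker (φ : A →ₙₐ[K] A') : (LinearMap.ker (φ : A →ₗ[K] A')).IsIdeal := by
  intro a b hb
  simp only [LinearMap.mem_ker, LinearMap.coe_coe, map_mul] at hb ⊢
  simp only [hb, mul_zero, zero_mul, and_self]

theorem map_mem_of_mem_idealSpan {s : Set A} {J : Submodule K A'} (hJ : J.IsIdeal)
    (φ : A →ₙₐ[K] A') (hs : ∀ x ∈ s, φ x ∈ J) {x : A} (hx : x ∈ idealSpan K s) : φ x ∈ J :=
  idealSpan_le (J := J.comap (φ : A →ₗ[K] A')) hs (hJ.comap φ) hx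

end IdealSpan

section SupIdeal

variable {D : Type*} [NonUnitalRing D] [Module K D] {S : NonUnitalSubalgebra K D}
  {I : Submodule K D}

theorem mul_mem_toSubmodule_sup (hI : I.IsIdeal) {x y : D} (hx : x ∈ S.toSubmodule ⊔ I)
    (hy : y ∈ S.toSubmodule ⊔ I) : x * y ∈ S.toSubmodule ⊔ I := by
  obtain ⟨s, hs, w, hw, rfl⟩ := Submodule.mem_sup.1 hx
  obtain ⟨t, ht, v, hv, rfl⟩ := Submodule.mem_sup.1 hy
  rw [add_mul, mul_add, mul_add, add_assoc]
  refine Submodule.add_mem _ (Submodule.mem_sup_left (S.mul_mem hs ht)) (Submodule.mem_sup_right ?_)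
  exact I.add_mem (hI s v hv).1 (I.add_mem (hI t w hw).2 (hI w v hv).1)

variable [IsScalarTower K D D] [SMulCommClass K D D]

theorem toSubmodule_sup_eq_top (hI : I.IsIdeal) {Z : Set D} (hZ : adjoin K Z = ⊤)
    (hZS : ∀ z ∈ Z, z ∈ S.toSubmodule ⊔ I) : S.toSubmodule ⊔ I = ⊤ := by
  refine Submodule.eq_top_iff'.2 fun x => ?_
  have hx : x ∈ adjoin K Z := hZ ▸ NonUnitalAlgebra.mem_top
  induction hx using adjoin_induction with
  | mem x hx => exact hZS x hx
  | add _ _ _ _ hx hy => exact Submodule.add_mem _ hx hy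
  | zero => exact Submodule.zero_mem _
  | mul _ _ _ _ hx hy => exact mul_mem_toSubmodule_sup hI hx hy
  | smul r _ _ hx => exact Submodule.smul_mem _ r hx

theorem mul_mem_toSubmodule_sup_of_forall_mem (hI : I.IsIdeal) {G : Set D} (hG : adjoin K G = S)
    {z : D} (hz : ∀ g ∈ G, z * g ∈ S.toSubmodule ⊔ I ∧ g * z ∈ S.toSubmodule ⊔ I)
    {s : D} (hs : s ∈ S) : z * s ∈ S.toSubmodule ⊔ I ∧ s * z ∈ S.toSubmodule ⊔ I := by
  have hS : ∀ {t}, t ∈ adjoin K G → t ∈ S.toSubmodule ⊔ I :=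
    fun ht => Submodule.mem_sup_left (hG ▸ ht)
  rw [← hG] at hs
  induction hs using adjoin_induction with
  | mem g hg => exact hz g hg
  | add x y _ _ hx hy =>
    rw [mul_add, add_mul]
    exact ⟨Submodule.add_mem _ hx.1 hy.1, Submodule.add_mem _ hx.2 hy.2⟩
  | zero => simp only [mul_zero, zero_mul, Submodule.zero_mem, and_self]
  | mul x y hx' hy' hx hy =>
    rw [← mul_assoc z x y, mul_assoc x y z]
    exact ⟨mul_mem_toSubmodule_sup hI hx.1 (hS hy'), mul_mem_toSubmodule_sup hI (hS hx') hy.2⟩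
  | smul r x _ hx =>
    rw [mul_smul_comm, smul_mul_assoc]
    exact ⟨Submodule.smul_mem _ r hx.1, Submodule.smul_mem _ r hx.2⟩

theorem isIdeal_toSubmodule_sup (hI : I.IsIdeal) {Z G : Set D} (hZ : adjoin K Z = ⊤)
    (hG : adjoin K G = S)
    (hZG : ∀ z ∈ Z, ∀ g ∈ G, z * g ∈ S.toSubmodule ⊔ I ∧ g * z ∈ S.toSubmodule ⊔ I) :
    (S.toSubmodule ⊔ I).IsIdeal := by
  intro a x hx
  have ha : a ∈ adjoin K Z := hZ ▸ NonUnitalAlgebra.mem_top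
  induction ha using adjoin_induction generalizing x with
  | mem z hz =>
    obtain ⟨s, hs, w, hw, rfl⟩ := Submodule.mem_sup.1 hx
    have hzs := mul_mem_toSubmodule_sup_of_forall_mem hI hG (hZG z hz) hs
    rw [mul_add, add_mul]
    exact ⟨Submodule.add_mem _ hzs.1 (Submodule.mem_sup_right (hI z w hw).1),
      Submodule.add_mem _ hzs.2 (Submodule.mem_sup_right (hI z w hw).2)⟩
  | add a b _ _ ha hb =>
    rw [mul_add, add_mul]
    exact ⟨Submodule.add_mem _ (ha x hx).1 (hb x hx).1, Submodule.add_mem _ (ha x hx).2 (hb x hx).2⟩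
  | zero => simp only [mul_zero, zero_mul, Submodule.zero_mem, and_self]
  | mul a b _ _ ha hb =>
    rw [mul_assoc a b x, ← mul_assoc x a b]
    exact ⟨(ha _ (hb x hx).1).1, (hb _ (ha x hx).2).2⟩
  | smul r a _ ha =>
    rw [smul_mul_assoc, mul_smul_comm]
    exact ⟨Submodule.smul_mem _ r (ha x hx).1, Submodule.smul_mem _ r (ha x hx).2⟩

end SupIdeal

namespace FreeNUAlg

variable {X Y : Type*}

noncomputable def of (K : Type*) [CommRing K] (i : X) : FreeNUAlg K X :=
  MonoidAlgebra.single (FreeSemigroup.of i) 1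

theorem single_of_mul (i : X) (w : FreeSemigroup X) :
    (MonoidAlgebra.single (FreeSemigroup.of i * w) 1 : FreeNUAlg K X) =
      of K i * MonoidAlgebra.single w 1 := by
  rw [of, MonoidAlgebra.single_mul_single, one_mul]

variable {A : Type*} [NonUnitalRing A] [Module K A]

theorem hom_ext {φ ψ : FreeNUAlg K X →ₙₐ[K] A} (h : ∀ i, φ (of K i) = ψ (of K i)) : φ = ψ := by
  refine MonoidAlgebra.nonUnitalAlgHom_ext K fun w => ?_
  induction w with
  | ih1 i => exact h i
  | ih2 i w _ hw => rw [single_of_mul, map_mul, map_mul, hw, h i]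

variable [IsScalarTower K A A] [SMulCommClass K A A]

noncomputable def lift (q : X → A) : FreeNUAlg K X →ₙₐ[K] A :=
  MonoidAlgebra.liftMagma K (FreeSemigroup.lift q)

@[simp]
theorem lift_of (q : X → A) (i : X) : lift q (of K i) = q i := by
  simp [lift, of, MonoidAlgebra.liftMagma_apply_apply]

theorem adjoin_range_of : adjoin K (Set.range (of K : X → FreeNUAlg K X)) = ⊤ := by
  have hword : ∀ w : FreeSemigroup X,
      MonoidAlgebra.single w 1 ∈ adjoin K (Set.range (of K : X → FreeNUAlg K X)) := by
    intro w
    induction w with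
    | ih1 i => exact subset_adjoin K ⟨i, rfl⟩
    | ih2 i w _ hw => rw [single_of_mul]; exact mul_mem (subset_adjoin K ⟨i, rfl⟩) hw
  refine NonUnitalAlgebra.eq_top_iff.2 fun x => ?_
  induction x using MonoidAlgebra.induction_linear with
  | zero => exact zero_mem _
  | add x y hx hy => exact add_mem hx hy
  | single w r =>
    rw [← mul_one r, ← MonoidAlgebra.smul_single']
    exact SMulMemClass.smul_mem r (hword w)

theorem range_eq_adjoin (φ : FreeNUAlg K X →ₙₐ[K] A) :
    NonUnitalAlgHom.range φ = adjoin K (Set.range fun i => φ (of K i)) := by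
  rw [← NonUnitalAlgebra.map_top, ← adjoin_range_of, NonUnitalAlgHom.map_adjoin, ← Set.range_comp]
  rfl

noncomputable def map (e : X → Y) : FreeNUAlg K X →ₙₐ[K] FreeNUAlg K Y :=
  lift (of K ∘ e)

@[simp]
theorem map_of (e : X → Y) (i : X) : map e (of K i) = of K (e i) :=
  lift_of _ i

end FreeNUAlg

section Extension

open FreeNUAlg

variable {A C : Type*} [NonUnitalRing A] [Module K A] [NonUnitalRing C] [Module K C]
  {B : NonUnitalSubalgebra K A} {f : A →ₙₐ[K] C} {m n : ℕ}

open Classical in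
noncomputable def preimageOfMem {P : Type*} [Zero P] {g : P → B} (hg : Surjective g) (a : A) : P :=
  if ha : a ∈ B then surjInv hg ⟨a, ha⟩ else 0

theorem apply_preimageOfMem {P : Type*} [Zero P] {g : P → B} (hg : Surjective g) {a : A}
    (ha : a ∈ B) : (g (preimageOfMem hg a) : A) = a := by
  rw [preimageOfMem, dif_pos ha, surjInv_eq hg]

variable [IsScalarTower K A A] [SMulCommClass K A A]

noncomputable def extensionHom (hf : Surjective f) (g : FreeNUAlg K (Fin m) →ₙₐ[K] B)
    (h : FreeNUAlg K (Fin n) →ₙₐ[K] C) : FreeNUAlg K (Fin (m + n)) →ₙₐ[K] A :=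
  lift (Fin.addCases (fun i => (g (of K i) : A)) fun j => surjInv hf (h (of K j)))

open Classical in
noncomputable def idealTerms (S : Finset (FreeNUAlg K (Fin n))) :
    Finset (FreeNUAlg K (Fin (m + n))) :=
  S.image (map (Fin.natAdd m)) ∪
    Finset.univ.image (fun p : Fin m × Fin n =>
      of K (Fin.natAdd m p.2) * of K (Fin.castAdd n p.1)) ∪
    Finset.univ.image (fun p : Fin m × Fin n =>
      of K (Fin.castAdd n p.1) * of K (Fin.natAdd m p.2))

open Classical in
noncomputable def extensionRelations (hf : Surjective f) (g : FreeNUAlg K (Fin m) →ₙₐ[K] B)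
    (h : FreeNUAlg K (Fin n) →ₙₐ[K] C) (hg : Surjective g) (T : Finset (FreeNUAlg K (Fin m)))
    (S : Finset (FreeNUAlg K (Fin n))) : Finset (FreeNUAlg K (Fin (m + n))) :=
  T.image (map (Fin.castAdd n)) ∪ (idealTerms S).image fun r =>
    r - map (Fin.castAdd n) (preimageOfMem hg (extensionHom hf g h r))

noncomputable def extensionIdeal (hf : Surjective f) (g : FreeNUAlg K (Fin m) →ₙₐ[K] B)
    (h : FreeNUAlg K (Fin n) →ₙₐ[K] C) (hg : Surjective g) (T : Finset (FreeNUAlg K (Fin m)))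
    (S : Finset (FreeNUAlg K (Fin n))) : Submodule K (FreeNUAlg K (Fin (m + n))) :=
  (NonUnitalAlgHom.range (map (Fin.castAdd n) : FreeNUAlg K (Fin m) →ₙₐ[K] _)).toSubmodule ⊔
    idealSpan K (extensionRelations hf g h hg T S : Set _)

variable {hf : Surjective f} {g : FreeNUAlg K (Fin m) →ₙₐ[K] B}
  {h : FreeNUAlg K (Fin n) →ₙₐ[K] C} {hg : Surjective g} {T : Finset (FreeNUAlg K (Fin m))}
  {S : Finset (FreeNUAlg K (Fin n))}

theorem map_natAdd_mem_idealTerms {s : FreeNUAlg K (Fin n)} (hs : s ∈ S) :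
    map (Fin.natAdd m) s ∈ idealTerms S := by
  simp only [idealTerms, Finset.mem_union, Finset.mem_image]
  exact Or.inl (Or.inl ⟨s, hs, rfl⟩)

theorem map_castAdd_mem_extensionRelations {t : FreeNUAlg K (Fin m)} (ht : t ∈ T) :
    map (Fin.castAdd n) t ∈ extensionRelations hf g h hg T S := by
  simp only [extensionRelations, Finset.mem_union, Finset.mem_image]
  exact Or.inl ⟨t, ht, rfl⟩

theorem sub_map_castAdd_mem_extensionRelations {r : FreeNUAlg K (Fin (m + n))}
    (hr : r ∈ idealTerms S) :
    r - map (Fin.castAdd n) (preimageOfMem hg (extensionHom hf g h r)) ∈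
      extensionRelations hf g h hg T S := by
  simp only [extensionRelations, Finset.mem_union, Finset.mem_image]
  exact Or.inr ⟨r, hr, rfl⟩

theorem extensionHom_map_castAdd (x : FreeNUAlg K (Fin m)) :
    extensionHom hf g h (map (Fin.castAdd n) x) = g x := by
  have : (extensionHom hf g h).comp (map (Fin.castAdd n)) =
      (NonUnitalSubalgebraClass.subtype B).comp g := by
    refine hom_ext fun i => ?_
    simp [extensionHom]
  exact DFunLike.congr_fun this x

theorem apply_extensionHom_map_natAdd (x : FreeNUAlg K (Fin n)) :
    f (extensionHom hf g h (map (Fin.natAdd m) x)) = h x := by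
  have : f.comp ((extensionHom hf g h).comp (map (Fin.natAdd m))) = h := by
    refine hom_ext fun j => ?_
    simp [extensionHom, surjInv_eq hf]
  exact DFunLike.congr_fun this x

theorem extensionHom_surjective (hker : ∀ x : A, f x = 0 ↔ x ∈ B) (hg : Surjective g)
    (hh : Surjective h) : Surjective (extensionHom hf g h) := by
  intro a
  obtain ⟨c, hc⟩ := hh (f a)
  have hB : a - extensionHom hf g h (map (Fin.natAdd m) c) ∈ B :=
    (hker _).1 (by rw [map_sub, apply_extensionHom_map_natAdd, hc, sub_self])
  obtain ⟨b, hb⟩ := hg ⟨_, hB⟩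
  refine ⟨map (Fin.natAdd m) c + map (Fin.castAdd n) b, ?_⟩
  rw [map_add, extensionHom_map_castAdd, hb, add_sub_cancel]

theorem extensionHom_mem_of_mem_idealTerms (hker : ∀ x : A, f x = 0 ↔ x ∈ B)
    (hS : ∀ x, h x = 0 ↔ x ∈ idealSpan K (S : Set _))
    {r : FreeNUAlg K (Fin (m + n))} (hr : r ∈ idealTerms S) : extensionHom hf g h r ∈ B := by
  have hX : ∀ i, f (extensionHom hf g h (of K (Fin.castAdd n i))) = 0 := fun i => by
    rw [← map_of, extensionHom_map_castAdd, hker]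
    exact (g _).2
  refine (hker _).1 ?_
  simp only [idealTerms, Finset.mem_union, Finset.mem_image, Finset.mem_univ, true_and] at hr
  rcases hr with (⟨s, hs, rfl⟩ | ⟨⟨i, j⟩, rfl⟩) | ⟨⟨i, j⟩, rfl⟩
  · rw [apply_extensionHom_map_natAdd, hS]
    exact subset_idealSpan _ hs
  · rw [map_mul, map_mul, hX, mul_zero]
  · rw [map_mul, map_mul, hX, zero_mul]

theorem idealSpan_extensionRelations_le_ker (hker : ∀ x : A, f x = 0 ↔ x ∈ B)
    (hT : ∀ x, g x = 0 ↔ x ∈ idealSpan K (T : Set _))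
    (hS : ∀ x, h x = 0 ↔ x ∈ idealSpan K (S : Set _)) :
    idealSpan K (extensionRelations hf g h hg T S : Set _) ≤
      LinearMap.ker (extensionHom hf g h : FreeNUAlg K (Fin (m + n)) →ₗ[K] A) := by
  refine idealSpan_le (fun r hr => ?_) (isIdeal_ker _)
  simp only [extensionRelations, Finset.coe_union, Finset.coe_image, Set.mem_union,
    Set.mem_image, Finset.mem_coe] at hr
  rw [SetLike.mem_coe, LinearMap.mem_ker, LinearMap.coe_coe]
  rcases hr with ⟨t, ht, rfl⟩ | ⟨r, hr, rfl⟩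
  · rw [extensionHom_map_castAdd, (hT t).2 (subset_idealSpan _ ht), ZeroMemClass.coe_zero]
  · rw [map_sub, extensionHom_map_castAdd,
      apply_preimageOfMem hg (extensionHom_mem_of_mem_idealTerms hker hS hr), sub_self]

theorem map_castAdd_mem_extensionIdeal (x : FreeNUAlg K (Fin m)) :
    map (Fin.castAdd n) x ∈ extensionIdeal hf g h hg T S :=
  Submodule.mem_sup_left (NonUnitalAlgHom.mem_range_self _ x)

theorem mem_extensionIdeal_of_mem_idealTerms {r : FreeNUAlg K (Fin (m + n))}
    (hr : r ∈ idealTerms S) : r ∈ extensionIdeal hf g h hg T S := by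
  rw [← sub_add_cancel r (map (Fin.castAdd n) (preimageOfMem hg (extensionHom hf g h r)))]
  exact Submodule.add_mem _
    (Submodule.mem_sup_right (subset_idealSpan _ (sub_map_castAdd_mem_extensionRelations hr)))
    (map_castAdd_mem_extensionIdeal _)

theorem isIdeal_extensionIdeal : (extensionIdeal hf g h hg T S).IsIdeal := by
  refine isIdeal_toSubmodule_sup (isIdeal_idealSpan _) adjoin_range_of (range_eq_adjoin _).symm ?_
  rintro _ ⟨k, rfl⟩ _ ⟨i, rfl⟩
  simp only [map_of]
  induction k using Fin.addCases with
  | left k =>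
    rw [← map_of (K := K) (Fin.castAdd n) k, ← map_of (K := K) (Fin.castAdd n) i, ← map_mul,
      ← map_mul]
    exact ⟨map_castAdd_mem_extensionIdeal _, map_castAdd_mem_extensionIdeal _⟩
  | right j =>
    constructor <;> refine mem_extensionIdeal_of_mem_idealTerms ?_ <;>
      simp [idealTerms]

theorem range_map_natAdd_sup_extensionIdeal :
    (NonUnitalAlgHom.range (map (Fin.natAdd m) : FreeNUAlg K (Fin n) →ₙₐ[K] _)).toSubmodule ⊔
      extensionIdeal hf g h hg T S = ⊤ := by
  refine toSubmodule_sup_eq_top isIdeal_extensionIdeal adjoin_range_of ?_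
  rintro _ ⟨k, rfl⟩
  induction k using Fin.addCases with
  | left i =>
    rw [← map_of (K := K) (Fin.castAdd n) i]
    exact Submodule.mem_sup_right (map_castAdd_mem_extensionIdeal _)
  | right j => exact Submodule.mem_sup_left ⟨of K j, map_of _ j⟩

theorem extensionIdeal_le_comap (hker : ∀ x : A, f x = 0 ↔ x ∈ B)
    (hT : ∀ x, g x = 0 ↔ x ∈ idealSpan K (T : Set _))
    (hS : ∀ x, h x = 0 ↔ x ∈ idealSpan K (S : Set _)) :
    extensionIdeal hf g h hg T S ≤
      B.toSubmodule.comap (extensionHom hf g h : FreeNUAlg K (Fin (m + n)) →ₗ[K] A) := by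
  refine sup_le (fun _ ⟨b, hb⟩ => ?_) fun x hx => ?_
  · rw [← hb]
    show extensionHom hf g h (map (Fin.castAdd n) b) ∈ B
    rw [extensionHom_map_castAdd]
    exact (g b).2
  · have hx0 := idealSpan_extensionRelations_le_ker hker hT hS hx
    rw [LinearMap.mem_ker] at hx0
    rw [Submodule.mem_comap, hx0]
    exact zero_mem _

theorem comap_extensionHom_eq_extensionIdeal (hker : ∀ x : A, f x = 0 ↔ x ∈ B)
    (hT : ∀ x, g x = 0 ↔ x ∈ idealSpan K (T : Set _))
    (hS : ∀ x, h x = 0 ↔ x ∈ idealSpan K (S : Set _)) :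
    B.toSubmodule.comap (extensionHom hf g h : FreeNUAlg K (Fin (m + n)) →ₗ[K] A) =
      extensionIdeal hf g h hg T S := by
  refine le_antisymm ?_ (extensionIdeal_le_comap hker hT hS)
  refine le_of_le_sup_of_inf_le (extensionIdeal_le_comap hker hT hS)
    (le_top.trans range_map_natAdd_sup_extensionIdeal.ge) ?_
  rintro _ ⟨hx, c, rfl⟩
  have hc : c ∈ idealSpan K (S : Set _) :=
    (hS c).1 (apply_extensionHom_map_natAdd (hf := hf) (g := g) c ▸ (hker _).2 hx)
  show map (Fin.natAdd m) c ∈ _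
  refine map_mem_of_mem_idealSpan isIdeal_extensionIdeal _ (fun s hs => ?_) hc
  exact mem_extensionIdeal_of_mem_idealTerms (map_natAdd_mem_idealTerms hs)

theorem ker_extensionHom_le (hker : ∀ x : A, f x = 0 ↔ x ∈ B)
    (hT : ∀ x, g x = 0 ↔ x ∈ idealSpan K (T : Set _))
    (hS : ∀ x, h x = 0 ↔ x ∈ idealSpan K (S : Set _)) :
    LinearMap.ker (extensionHom hf g h : FreeNUAlg K (Fin (m + n)) →ₗ[K] A) ≤
      idealSpan K (extensionRelations hf g h hg T S : Set _) := by
  have hker_le : LinearMap.ker (extensionHom hf g h : FreeNUAlg K (Fin (m + n)) →ₗ[K] A) ≤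
      extensionIdeal hf g h hg T S := by
    rw [← comap_extensionHom_eq_extensionIdeal hker hT hS]
    intro x hx
    rw [Submodule.mem_comap, LinearMap.mem_ker.1 hx]
    exact zero_mem _
  refine le_of_le_sup_of_inf_le (idealSpan_extensionRelations_le_ker hker hT hS) hker_le ?_
  rintro _ ⟨hx, b, rfl⟩
  have hb : b ∈ idealSpan K (T : Set _) :=
    (hT b).1 (Subtype.ext (extensionHom_map_castAdd (hf := hf) (h := h) b ▸ hx))
  show map (Fin.castAdd n) b ∈ _
  refine map_mem_of_mem_idealSpan (isIdeal_idealSpan _) _ (fun t ht => ?_) hb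
  exact subset_idealSpan _ (map_castAdd_mem_extensionRelations ht)

end Extension

end

theorem fp_of_ideal_fp_of_quotient_fp_general
    (K A C : Type*) [CommRing K]
    [NonUnitalRing A] [Module K A] [IsScalarTower K A A] [SMulCommClass K A A]
    [NonUnitalRing C] [Module K C] [IsScalarTower K C C] [SMulCommClass K C C]
    (B : NonUnitalSubalgebra K A)
    (f : A →ₙₐ[K] C) (hf : Function.Surjective f) (hker : ∀ x : A, f x = 0 ↔ x ∈ B)
    (hBfp : NUAlgFP K B) (hCfp : NUAlgFP K C) :
    NUAlgFP K A := by
  obtain ⟨m, g, hg, T, hT⟩ := hBfp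
  obtain ⟨n, h, hh, S, hS⟩ := hCfp
  refine ⟨m + n, extensionHom hf g h, extensionHom_surjective hker hg hh,
    extensionRelations hf g h hg T S, fun x => ⟨fun hx => ?_, fun hx => ?_⟩⟩
  · exact ker_extensionHom_le hker hT hS hx
  · exact idealSpan_extensionRelations_le_ker hker hT hS hx

/-- Let `K` be a commutative ring with identity, `A` an associative
`K`-algebra (not necessarily commutative or unital) and `B` a two-sided ideal of `A`
(a `K`-subalgebra closed under left and right multiplication by arbitrary elements of `A`).
If `B` is finitely presented as a `K`-algebra, and the quotient algebra `A/B` — realized as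
any `K`-algebra `C` together with a surjective homomorphism `A → C` with kernel `B` — is
finitely presented as a `K`-algebra, then `A` is finitely presented as a `K`-algebra. -/
theorem fp_of_ideal_fp_of_quotient_fp
    (K A C : Type*) [CommRing K]
    [NonUnitalRing A] [Module K A] [IsScalarTower K A A] [SMulCommClass K A A]
    [NonUnitalRing C] [Module K C] [IsScalarTower K C C] [SMulCommClass K C C]
    (B : NonUnitalSubalgebra K A)
    (hBl : ∀ a b : A, b ∈ B → a * b ∈ B) (hBr : ∀ a b : A, b ∈ B → b * a ∈ B)
    (f : A →ₙₐ[K] C) (hf : Function.Surjective f) (hker : ∀ x : A, f x = 0 ↔ x ∈ B)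
    (hBfp : NUAlgFP K B) (hCfp : NUAlgFP K C) :
    NUAlgFP K A :=
  fp_of_ideal_fp_of_quotient_fp_general K A C B f hf hker hBfp hCfp
end

section
/- Let K be a field, let L(x,y) be the free Lie algebra over K on two generators x and y, and let h : L(x,y) → K be the Lie algebra homomorphism to K (regarded as the one-dimensional abelian Lie algebra) determined by h(x) = 1 and h(y) = 0. Then B = ker h is an ideal of codimension 1 in L(x,y), and B is not finitely generated as a Lie algebra. -/
/-!
Let `x` act on `V = K[X] × K` by `(p, c) ↦ (X p, 0)` and `y` by `(p, c) ↦ (c, 0)`. Every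
`z ∈ L(x,y)` then acts by a block matrix `[[h(z) X, c(z)], [0, 0]]`, and the linear map `c` is a
1-cocycle: `c ⁅a, b⁆ = h(a) X c(b) - h(b) X c(a)`. Hence `c` vanishes on `⁅B, B⁆`, so it maps the
Lie subalgebra generated by a finite set `s` of `B` into the finite-dimensional span of `c(s)`.
But `c((ad x)ⁿ y) = Xⁿ`, so `c(B)` spans `K[X]`, which is infinite-dimensional.
-/

attribute [local instance 100] LieRing.ofAssociativeRing

/-- `K` is the one-dimensional abelian Lie algebra as the commutative ring `K` with its (trivial)
commutator bracket; the generators are `x = of 0` and `y = of 1`. -/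
noncomputable def h18 (K : Type*) [Field K] : FreeLieAlgebra K (Fin 2) →ₗ⁅K⁆ K :=
  FreeLieAlgebra.lift K ![1, 0]

noncomputable def B18 (K : Type*) [Field K] : LieIdeal K (FreeLieAlgebra K (Fin 2)) :=
  (h18 K).ker

open Polynomial LieSubalgebra

namespace FreeLieAlgebra

variable {R X : Type*} [CommRing R]

theorem lieSpan_range_of : lieSpan R (FreeLieAlgebra R X) (Set.range (of R)) = ⊤ := by
  set S := lieSpan R (FreeLieAlgebra R X) (Set.range (of R))
  have hS : S.incl.comp (lift R fun x => ⟨of R x, subset_lieSpan ⟨x, rfl⟩⟩) =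
      LieHom.id (R := R) :=
    hom_ext fun x => by simp [lift_of_apply]
  refine eq_top_iff.2 fun z _ => ?_
  rw [← LieHom.id_apply (R := R) z, ← hS]
  exact Subtype.prop _

@[elab_as_elim]
theorem induction_on {p : FreeLieAlgebra R X → Prop} (z : FreeLieAlgebra R X)
    (gen : ∀ x, p (of R x)) (zero : p 0) (add : ∀ a b, p a → p b → p (a + b))
    (smul : ∀ (t : R) a, p a → p (t • a)) (lie : ∀ a b, p a → p b → p ⁅a, b⁆) : p z :=
  lieSpan_induction R (s := Set.range (FreeLieAlgebra.of R)) (p := fun a _ => p a)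
    (by rintro _ ⟨x, rfl⟩; exact gen x) zero
    (fun a b _ _ => add a b) (fun t a _ => smul t a) (fun a b _ _ => lie a b)
    ((lieSpan_range_of (R := R) (X := X)).symm ▸ LieSubalgebra.mem_top z)

end FreeLieAlgebra

theorem LieSubalgebra.apply_mem_span_image_of_mem_lieSpan {R L M : Type*} [CommRing R]
    [LieRing L] [LieAlgebra R L] [AddCommGroup M] [Module R M] {s : Set L} (f : L →ₗ[R] M)
    (hf : ∀ a ∈ lieSpan R L s, ∀ b ∈ lieSpan R L s, f ⁅a, b⁆ = 0) {z : L}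
    (hz : z ∈ lieSpan R L s) : f z ∈ Submodule.span R (f '' s) := by
  induction hz using lieSpan_induction with
  | mem x hx => exact Submodule.subset_span ⟨x, hx, rfl⟩
  | zero => simp
  | add x y _ _ hx hy => simpa using add_mem hx hy
  | smul t x _ hx => simpa using Submodule.smul_mem _ t hx
  | lie x y hx hy => simp [hf x hx y hy]

theorem LieHom.map_lie_eq_zero_of_commRing {R L A : Type*} [CommRing R] [LieRing L]
    [LieAlgebra R L] [CommRing A] [Algebra R A] (f : L →ₗ⁅R⁆ A) (a b : L) : f ⁅a, b⁆ = 0 := by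
  rw [LieHom.map_lie, Ring.lie_def, mul_comm, sub_self]

theorem LieHom.finrank_quotient_ker_eq_one {K L : Type*} [Field K] [LieRing L] [LieAlgebra K L]
    (f : L →ₗ⁅K⁆ K) (hf : Function.Surjective f) :
    Module.finrank K (L ⧸ (f.ker : Submodule K L)) = 1 := by
  rw [LieIdeal.toLieSubalgebra_toSubmodule, LieHom.ker_toSubmodule,
    ((f : L →ₗ[K] K).quotKerEquivOfSurjective hf).finrank_eq, Module.finrank_self]

theorem Polynomial.span_range_X_pow_eq_top (R : Type*) [Semiring R] :
    Submodule.span R (Set.range fun n : ℕ => (X : R[X]) ^ n) = ⊤ := by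
  simpa [X_pow_eq_monomial] using (basisMonomials R).span_eq

@[simp] theorem h18_of_zero (K : Type*) [Field K] : h18 K (FreeLieAlgebra.of K 0) = 1 := by
  simp [h18, FreeLieAlgebra.lift_of_apply]

@[simp] theorem h18_of_one (K : Type*) [Field K] : h18 K (FreeLieAlgebra.of K 1) = 0 := by
  simp [h18, FreeLieAlgebra.lift_of_apply]

namespace B18

variable (K : Type*) [Field K]

noncomputable def mulXFst : Module.End K (K[X] × K) :=
  LinearMap.inl K K[X] K ∘ₗ LinearMap.mulLeft K X ∘ₗ LinearMap.fst K K[X] K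

noncomputable def constSnd : Module.End K (K[X] × K) :=
  LinearMap.inl K K[X] K ∘ₗ Algebra.linearMap K K[X] ∘ₗ LinearMap.snd K K[X] K

noncomputable def rep : FreeLieAlgebra K (Fin 2) →ₗ⁅K⁆ Module.End K (K[X] × K) :=
  FreeLieAlgebra.lift K ![mulXFst K, constSnd K]

@[simp] theorem rep_of_zero_apply (v : K[X] × K) :
    rep K (FreeLieAlgebra.of K 0) v = (X * v.1, 0) := by
  simp [rep, FreeLieAlgebra.lift_of_apply, mulXFst]

@[simp] theorem rep_of_one_apply (v : K[X] × K) :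
    rep K (FreeLieAlgebra.of K 1) v = (C v.2, 0) := by
  simp [rep, FreeLieAlgebra.lift_of_apply, constSnd, Algebra.linearMap_apply, algebraMap_eq]

theorem rep_apply_snd (z : FreeLieAlgebra K (Fin 2)) (v : K[X] × K) : (rep K z v).2 = 0 := by
  induction z using FreeLieAlgebra.induction_on generalizing v with
  | gen i => fin_cases i <;> simp
  | zero => rfl
  | add a b ha hb => simp [ha, hb]
  | smul t a ha => simp [ha]
  | lie a b ha hb => simp [Ring.lie_def, ha, hb]

theorem rep_apply_inl (z : FreeLieAlgebra K (Fin 2)) (r : K[X]) :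
    rep K z (r, 0) = (h18 K z • (X * r), 0) := by
  induction z using FreeLieAlgebra.induction_on generalizing r with
  | gen i => fin_cases i <;> simp
  | zero => simp only [map_zero, LinearMap.zero_apply, zero_smul, Prod.mk_zero_zero]
  | add a b ha hb => simp [ha, hb, add_smul]
  | smul t a ha => simp [ha, smul_smul]
  | lie a b ha hb =>
    rw [LieHom.map_lie_eq_zero_of_commRing, zero_smul, LieHom.map_lie, Ring.lie_def,
      LinearMap.sub_apply, Module.End.mul_apply, Module.End.mul_apply, hb, ha, ha, hb,
      Prod.mk_sub_mk, mul_smul_comm, mul_smul_comm, smul_comm (h18 K a), sub_self, sub_self,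
      Prod.mk_zero_zero]

noncomputable def cocycle : FreeLieAlgebra K (Fin 2) →ₗ[K] K[X] :=
  LinearMap.fst K K[X] K ∘ₗ LinearMap.applyₗ ((0, 1) : K[X] × K) ∘ₗ
    (rep K : FreeLieAlgebra K (Fin 2) →ₗ[K] _)

theorem rep_apply_zero_one (z : FreeLieAlgebra K (Fin 2)) : rep K z (0, 1) = (cocycle K z, 0) :=
  Prod.ext rfl (rep_apply_snd K z _)

theorem cocycle_lie (a b : FreeLieAlgebra K (Fin 2)) :
    cocycle K ⁅a, b⁆ = h18 K a • (X * cocycle K b) - h18 K b • (X * cocycle K a) := by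
  have h := rep_apply_zero_one K ⁅a, b⁆
  simp only [Ring.lie_def, LieHom.map_lie, LinearMap.sub_apply, Module.End.mul_apply,
    rep_apply_zero_one, rep_apply_inl, Prod.mk_sub_mk, sub_zero, Prod.mk.injEq] at h
  exact h.1.symm

theorem cocycle_lie_eq_zero {a b : FreeLieAlgebra K (Fin 2)} (ha : a ∈ B18 K) (hb : b ∈ B18 K) :
    cocycle K ⁅a, b⁆ = 0 := by
  rw [cocycle_lie, LieHom.mem_ker.1 ha, LieHom.mem_ker.1 hb, zero_smul, zero_smul, sub_zero]

noncomputable def adXPowY : ℕ → FreeLieAlgebra K (Fin 2)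
  | 0 => FreeLieAlgebra.of K 1
  | n + 1 => ⁅FreeLieAlgebra.of K (0 : Fin 2), adXPowY n⁆

theorem adXPowY_mem (n : ℕ) : adXPowY K n ∈ B18 K := by
  induction n with
  | zero => exact LieHom.mem_ker.2 (h18_of_one K)
  | succ n ih => exact (B18 K).lie_mem ih

theorem cocycle_adXPowY (n : ℕ) : cocycle K (adXPowY K n) = X ^ n := by
  induction n with
  | zero => simp [adXPowY, cocycle]
  | succ n ih =>
    rw [adXPowY, cocycle_lie, ih, LieHom.mem_ker.1 (adXPowY_mem K n), h18_of_zero, one_smul,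
      zero_smul, sub_zero, pow_succ']

theorem coe_lieSpan_ne (s : Finset (FreeLieAlgebra K (Fin 2))) :
    (lieSpan K _ (s : Set (FreeLieAlgebra K (Fin 2))) : Set (FreeLieAlgebra K (Fin 2))) ≠
      B18 K := by
  intro hs
  have hmem {z} : z ∈ lieSpan K _ (s : Set (FreeLieAlgebra K (Fin 2))) ↔ z ∈ B18 K :=
    Set.ext_iff.1 hs z
  have hX (n : ℕ) : X ^ n ∈ Submodule.span K (cocycle K '' s) := by
    rw [← cocycle_adXPowY]
    exact apply_mem_span_image_of_mem_lieSpan _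
      (fun a ha b hb => cocycle_lie_eq_zero K (hmem.1 ha) (hmem.1 hb)) (hmem.2 (adXPowY_mem K n))
  have htop : Submodule.span K (cocycle K '' s) = ⊤ := by
    rw [eq_top_iff, ← span_range_X_pow_eq_top, Submodule.span_le]
    exact Set.range_subset_iff.2 hX
  exact Polynomial.not_finite ⟨htop ▸ Submodule.fg_span (s.finite_toSet.image _)⟩

theorem finrank_quotient : Module.finrank K
    (FreeLieAlgebra K (Fin 2) ⧸ ((B18 K : Submodule K (FreeLieAlgebra K (Fin 2))))) = 1 :=
  (h18 K).finrank_quotient_ker_eq_one fun c => ⟨c • FreeLieAlgebra.of K 0, by simp⟩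

end B18

/-- Let `K` be a field, `L(x,y)` the free Lie algebra over `K` on two
generators, and `h : L(x,y) → K` the Lie algebra homomorphism to the one-dimensional
abelian Lie algebra `K` with `h(x) = 1`, `h(y) = 0`. Then `B = ker h` is an ideal of
codimension `1` in `L(x,y)`, and `B` is not finitely generated as a Lie algebra: there is
no finite subset of `B` whose Lie subalgebra span is all of `B`. -/
theorem kernel_codimension_one_not_finitely_generated (K : Type*) [Field K] :
    Module.finrank K
      (FreeLieAlgebra K (Fin 2) ⧸
        ((B18 K : Submodule K (FreeLieAlgebra K (Fin 2))))) = 1 ∧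
    ¬ ∃ s : Finset (FreeLieAlgebra K (Fin 2)),
        (s : Set (FreeLieAlgebra K (Fin 2))) ⊆ (B18 K : Set (FreeLieAlgebra K (Fin 2))) ∧
        (LieSubalgebra.lieSpan K (FreeLieAlgebra K (Fin 2))
            (s : Set (FreeLieAlgebra K (Fin 2))) : Set (FreeLieAlgebra K (Fin 2))) =
          (B18 K : Set (FreeLieAlgebra K (Fin 2))) :=
  ⟨B18.finrank_quotient K, fun ⟨s, _, hs⟩ => B18.coe_lieSpan_ne K s hs⟩
end
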